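/- Singleton lemma for products of components (key step of Seguin's field-of-definition theorem): Let G be a finite group and H, K subgroups such that the join ⟨H, K⟩ equals the set HK = {hk : h ∈ H, k ∈ K}. Let a = (a₁,…,a_r) be a tuple with entries in H, with a₁⋯a_r = 1, whose entries generate H, and let b = (b₁,…,b_s) be a tuple with entries in K, with b₁⋯b_s = 1, whose entries generate K. Then for all γ, δ ∈ ⟨H, K⟩ such that the join of γHγ⁻¹ and δKδ⁻¹ equals ⟨H, K⟩, the concatenation (γa₁γ⁻¹,…,γa_rγ⁻¹, δb₁δ⁻¹,…,δb_sδ⁻¹) is braid-equivalent to the concatenation (a₁,…,a_r, b₁,…,b_s). (The set of components [a^γ][b^δ] with such γ, δ is the singleton {[a][b]}.) -/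

import Mathlib

/-- The elementary braid move `Q_i`: `w` is obtained from `v` by replacing
`(…, g_i, g_{i+1}, …)` with `(…, g_i g_{i+1} g_i⁻¹, g_i, …)`. -/
def BraidStep {G : Type*} [Group G] {r : ℕ} (v w : Fin r → G) : Prop :=
  ∃ i : ℕ, ∃ h : i + 1 < r,
    w ⟨i, Nat.lt_of_succ_lt h⟩ =
      v ⟨i, Nat.lt_of_succ_lt h⟩ * v ⟨i + 1, h⟩ * (v ⟨i, Nat.lt_of_succ_lt h⟩)⁻¹ ∧
    w ⟨i + 1, h⟩ = v ⟨i, Nat.lt_of_succ_lt h⟩ ∧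
    ∀ j : Fin r, j.val ≠ i → j.val ≠ i + 1 → w j = v j

/-- Two tuples are braid-equivalent if they are related by the equivalence relation
generated by the elementary braid moves and their inverses (the Hurwitz action of `B_r`). -/
def BraidEquiv {G : Type*} [Group G] {r : ℕ} (v w : Fin r → G) : Prop :=
  Relation.EqvGen BraidStep v w
open Pointwise

/-!
On tuples with product `1`, braid moves realise the cyclic rotations. Sliding the first entry `x`
past all others conjugates them by `x`, and a rotation brings `x` back to the front, so a
product-one tuple is braid-equivalent to its conjugate by any of its entries, hence by any
element of the group they generate.

Write `γ⁻¹δ = hk` with `h ∈ H`, `k ∈ K`. Conjugating `(a^γ, b^δ)`, whose entries generate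
`⟨H, K⟩ ∋ γ`, by `γ⁻¹` gives `(a, b^{hk})`; conjugating that by `h⁻¹ ∈ H` gives
`(a^{h⁻¹}, b^k)`, and each block is then conjugated back separately.
-/

theorem Relation.EqvGen.map {α β : Type*} {r : α → α → Prop} {s : β → β → Prop} (f : α → β)
    (hf : ∀ a b, r a b → s (f a) (f b)) {a b : α} (h : Relation.EqvGen r a b) :
    Relation.EqvGen s (f a) (f b) := by
  induction h with
  | rel a b hab => exact .rel _ _ (hf a b hab)
  | refl a => exact .refl _
  | symm a b _ ih => exact .symm _ _ ih
  | trans a b c _ _ ih₁ ih₂ => exact .trans _ _ _ ih₁ ih₂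

section ListBraid

variable {G : Type*} [Group G]

/-- The move `Q_i` on lists, where `i` is the length of `p`. -/
def ListBraidStep (l l' : List G) : Prop :=
  ∃ (p q : List G) (x y : G), l = p ++ x :: y :: q ∧ l' = p ++ (x * y * x⁻¹) :: x :: q

def ListBraidEquiv : List G → List G → Prop :=
  Relation.EqvGen ListBraidStep

namespace ListBraidStep

theorem length_eq {l l' : List G} (h : ListBraidStep l l') : l.length = l'.length := by
  obtain ⟨p, q, x, y, rfl, rfl⟩ := h
  simp

theorem braidStep_getD {l l' : List G} (h : ListBraidStep l l') {r : ℕ} (hr : l.length = r) :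
    BraidStep (fun i : Fin r => l.getD i 1) (fun i : Fin r => l'.getD i 1) := by
  obtain ⟨p, q, x, y, rfl, rfl⟩ := h
  have hi : p.length + 1 < r := by
    simp only [List.length_append, List.length_cons] at hr
    omega
  refine ⟨p.length, hi, by simp, by simp, fun j hj hj' => ?_⟩
  simp only [List.getD_eq_getElem?_getD, List.getElem?_append]
  split_ifs
  · rfl
  · obtain ⟨k, hk⟩ : ∃ k, j - p.length = k + 2 := ⟨j - p.length - 2, by omega⟩
    simp [hk]

end ListBraidStep

namespace ListBraidEquiv

theorem refl (l : List G) : ListBraidEquiv l l := Relation.EqvGen.refl l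

theorem symm {l l' : List G} (h : ListBraidEquiv l l') : ListBraidEquiv l' l :=
  Relation.EqvGen.symm _ _ h

theorem trans {l₁ l₂ l₃ : List G} (h₁ : ListBraidEquiv l₁ l₂) (h₂ : ListBraidEquiv l₂ l₃) :
    ListBraidEquiv l₁ l₃ :=
  Relation.EqvGen.trans _ _ _ h₁ h₂

instance : Trans (ListBraidEquiv (G := G)) ListBraidEquiv ListBraidEquiv := ⟨trans⟩

theorem of_step {l l' : List G} (h : ListBraidStep l l') : ListBraidEquiv l l' :=
  Relation.EqvGen.rel _ _ h

theorem length_eq {l l' : List G} (h : ListBraidEquiv l l') : l.length = l'.length := by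
  induction h with
  | rel _ _ h => exact h.length_eq
  | refl => rfl
  | symm _ _ _ ih => exact ih.symm
  | trans _ _ _ _ _ ih₁ ih₂ => exact ih₁.trans ih₂

theorem prod_eq {l l' : List G} (h : ListBraidEquiv l l') : l.prod = l'.prod := by
  induction h with
  | rel _ _ h =>
    obtain ⟨p, q, x, y, rfl, rfl⟩ := h
    simp [mul_assoc]
  | refl => rfl
  | symm _ _ _ ih => exact ih.symm
  | trans _ _ _ _ _ ih₁ ih₂ => exact ih₁.trans ih₂

theorem braidEquiv_getD {l l' : List G} (h : ListBraidEquiv l l') {r : ℕ} (hr : l.length = r) :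
    BraidEquiv (fun i : Fin r => l.getD i 1) (fun i : Fin r => l'.getD i 1) := by
  induction h with
  | rel _ _ h => exact .rel _ _ (h.braidStep_getD hr)
  | refl => exact .refl _
  | symm _ _ h ih => exact .symm _ _ (ih ((length_eq h).trans hr))
  | trans _ _ _ h₁ _ ih₁ ih₂ => exact .trans _ _ _ (ih₁ hr) (ih₂ ((length_eq h₁).symm.trans hr))

theorem braidEquiv {r : ℕ} {v w : Fin r → G} (h : ListBraidEquiv (List.ofFn v) (List.ofFn w)) :
    BraidEquiv v w := by
  simpa using h.braidEquiv_getD (List.length_ofFn)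

theorem append_left (p : List G) {l l' : List G} (h : ListBraidEquiv l l') :
    ListBraidEquiv (p ++ l) (p ++ l') :=
  Relation.EqvGen.map (p ++ ·)
    (fun _ _ ⟨p', q, x, y, hl, hl'⟩ => ⟨p ++ p', q, x, y, by simp [hl], by simp [hl']⟩) h

theorem append_right {l l' : List G} (h : ListBraidEquiv l l') (q : List G) :
    ListBraidEquiv (l ++ q) (l' ++ q) :=
  Relation.EqvGen.map (· ++ q)
    (fun _ _ ⟨p, q', x, y, hl, hl'⟩ => ⟨p, q' ++ q, x, y, by simp [hl], by simp [hl']⟩) h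

theorem cons (x : G) {l l' : List G} (h : ListBraidEquiv l l') :
    ListBraidEquiv (x :: l) (x :: l') :=
  h.append_left [x]

theorem map_conj (g : G) {l l' : List G} (h : ListBraidEquiv l l') :
    ListBraidEquiv (l.map (MulAut.conj g)) (l'.map (MulAut.conj g)) :=
  Relation.EqvGen.map (List.map (MulAut.conj g))
    (fun _ _ ⟨p, q, x, y, hl, hl'⟩ =>
      ⟨p.map (MulAut.conj g), q.map (MulAut.conj g), MulAut.conj g x, MulAut.conj g y,
        by simp [hl], by simp [hl', mul_assoc]⟩) h

end ListBraidEquiv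

open ListBraidEquiv

theorem map_conj_map_conj (g h : G) (l : List G) :
    (l.map (MulAut.conj h)).map (MulAut.conj g) = l.map (MulAut.conj (g * h)) := by
  simp [List.map_map, Function.comp_def, mul_assoc]

theorem listBraidEquiv_cons_map_conj_append (x : G) (l : List G) :
    ListBraidEquiv (x :: l) (l.map (MulAut.conj x) ++ [x]) := by
  induction l with
  | nil => exact .refl _
  | cons y l ih =>
    calc ListBraidEquiv (x :: y :: l) (MulAut.conj x y :: x :: l) :=
          of_step ⟨[], l, x, y, rfl, rfl⟩
      ListBraidEquiv _ _ := ih.cons _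

theorem listBraidEquiv_append_singleton (l : List G) (x : G) :
    ListBraidEquiv (l ++ [x]) (MulAut.conj l.prod x :: l) := by
  induction l with
  | nil => simpa using .refl _
  | cons y l ih =>
    calc ListBraidEquiv (y :: l ++ [x]) (y :: MulAut.conj l.prod x :: l) := ih.cons y
      ListBraidEquiv _ _ := of_step ⟨[], l, y, MulAut.conj l.prod x, rfl, by simp [mul_assoc]⟩

theorem listBraidEquiv_append_singleton_of_mul_prod_eq_one {x : G} {l : List G}
    (h : x * l.prod = 1) : ListBraidEquiv (l ++ [x]) (x :: l) := by
  simpa [eq_inv_of_mul_eq_one_right h] using listBraidEquiv_append_singleton l x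

theorem listBraidEquiv_append_comm {p q : List G} (h : (p ++ q).prod = 1) :
    ListBraidEquiv (p ++ q) (q ++ p) := by
  induction p generalizing q with
  | nil => simpa using .refl q
  | cons x p ih =>
    have hx : x * (p ++ q).prod = 1 := by simpa using h
    calc ListBraidEquiv (x :: p ++ q) (p ++ (q ++ [x])) := by
          simpa using (listBraidEquiv_append_singleton_of_mul_prod_eq_one hx).symm
      ListBraidEquiv _ _ := by
          simpa using ih (q := q ++ [x]) (by simpa [mul_assoc] using mul_eq_one_comm.mp hx)

theorem listBraidEquiv_map_conj_head {x : G} {l : List G} (h : x * l.prod = 1) :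
    ListBraidEquiv (x :: l) ((x :: l).map (MulAut.conj x)) := by
  have hx : x * (l.map (MulAut.conj x)).prod = 1 := by
    simp [← map_list_prod, eq_inv_of_mul_eq_one_right h]
  calc ListBraidEquiv (x :: l) (l.map (MulAut.conj x) ++ [x]) :=
        listBraidEquiv_cons_map_conj_append x l
    ListBraidEquiv _ _ := by simpa using listBraidEquiv_append_singleton_of_mul_prod_eq_one hx

theorem listBraidEquiv_map_conj_of_mem {l : List G} (hl : l.prod = 1) {x : G} (hx : x ∈ l) :
    ListBraidEquiv l (l.map (MulAut.conj x)) := by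
  obtain ⟨p, q, rfl⟩ := List.append_of_mem hx
  have hrot := listBraidEquiv_append_comm hl
  calc ListBraidEquiv (p ++ x :: q) (x :: (q ++ p)) := by simpa using hrot
    ListBraidEquiv _ _ := listBraidEquiv_map_conj_head (by simpa [hl] using hrot.prod_eq.symm)
    ListBraidEquiv _ _ := by simpa using hrot.symm.map_conj x

theorem listBraidEquiv_map_conj_of_mem_closure {l : List G} (hl : l.prod = 1) {g : G}
    (hg : g ∈ Subgroup.closure {x | x ∈ l}) : ListBraidEquiv l (l.map (MulAut.conj g)) := by
  induction hg using Subgroup.closure_induction with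
  | mem x hx => exact listBraidEquiv_map_conj_of_mem hl hx
  | one => simpa using .refl l
  | mul x y _ _ ihx ihy => simpa [List.map_map] using ihx.trans (ihy.map_conj x)
  | inv x _ ih => simpa [List.map_map] using (ih.map_conj x⁻¹).symm

theorem listBraidEquiv_append_map_conj_mul {A B : List G} (hA : A.prod = 1) (hB : B.prod = 1)
    {h k : G} (hh : h ∈ Subgroup.closure {x | x ∈ A}) (hk : k ∈ Subgroup.closure {x | x ∈ B}) :
    ListBraidEquiv (A ++ B.map (MulAut.conj (h * k))) (A ++ B) := by
  have hAB : (A ++ B.map (MulAut.conj (h * k))).prod = 1 := by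
    rw [List.prod_append, ← map_list_prod, hA, hB, map_one, one_mul]
  have hh' : h⁻¹ ∈ Subgroup.closure {x | x ∈ A ++ B.map (MulAut.conj (h * k))} :=
    Subgroup.closure_mono (fun x hx => List.mem_append_left _ hx) (inv_mem hh)
  calc ListBraidEquiv (A ++ B.map (MulAut.conj (h * k)))
        (A.map (MulAut.conj h⁻¹) ++ B.map (MulAut.conj k)) := by
        simpa only [List.map_append, map_conj_map_conj, inv_mul_cancel_left] using
          listBraidEquiv_map_conj_of_mem_closure hAB hh'
    ListBraidEquiv _ (A ++ B.map (MulAut.conj k)) :=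
        (listBraidEquiv_map_conj_of_mem_closure hA (inv_mem hh)).symm.append_right _
    ListBraidEquiv _ _ := (listBraidEquiv_map_conj_of_mem_closure hB hk).symm.append_left _

theorem closure_setOf_mem_map_conj (g : G) (l : List G) :
    Subgroup.closure {x | x ∈ l.map (MulAut.conj g)} =
      (Subgroup.closure {x | x ∈ l}).map (MulAut.conj g).toMonoidHom := by
  rw [MonoidHom.map_closure]
  exact congrArg _ (Set.ext fun _ => List.mem_map)

end ListBraid

theorem seguin_singleton_lemma_general {G : Type*} [Group G] (H K : Subgroup G)
    (hHK : ((H ⊔ K : Subgroup G) : Set G) = (H : Set G) * (K : Set G))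
    {r s : ℕ} (a : Fin r → G) (b : Fin s → G)
    (haprod : (List.ofFn a).prod = 1)
    (hagen : Subgroup.closure (Set.range a) = H)
    (hbprod : (List.ofFn b).prod = 1)
    (hbgen : Subgroup.closure (Set.range b) = K)
    (γ δ : G) (hγ : γ ∈ H ⊔ K) (hδ : δ ∈ H ⊔ K)
    (hjoin : Subgroup.map ((MulAut.conj γ).toMonoidHom) H ⊔
        Subgroup.map ((MulAut.conj δ).toMonoidHom) K = H ⊔ K) :
    BraidEquiv
      (Fin.append (fun i => γ * a i * γ⁻¹) (fun j => δ * b j * δ⁻¹))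
      (Fin.append a b) := by
  have hγδ : γ⁻¹ * δ ∈ ((H ⊔ K : Subgroup G) : Set G) := mul_mem (inv_mem hγ) hδ
  obtain ⟨h, hh, k, hk, hhk⟩ := Set.mem_mul.mp (hHK ▸ hγδ)
  have hA : Subgroup.closure {x | x ∈ List.ofFn a} = H := by
    simpa only [List.mem_ofFn', Set.ofPred_mem_eq] using hagen
  have hB : Subgroup.closure {x | x ∈ List.ofFn b} = K := by
    simpa only [List.mem_ofFn', Set.ofPred_mem_eq] using hbgen
  set L := (List.ofFn a).map (MulAut.conj γ) ++ (List.ofFn b).map (MulAut.conj δ)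
  have hL : Subgroup.closure {x | x ∈ L} = H ⊔ K := by
    simp only [L, List.mem_append, Set.ofPred_or, Subgroup.closure_union,
      closure_setOf_mem_map_conj, hA, hB, hjoin]
  have hLprod : L.prod = 1 := by
    rw [List.prod_append, ← map_list_prod, ← map_list_prod, haprod, hbprod,
      map_one, map_one, one_mul]
  apply ListBraidEquiv.braidEquiv
  rw [List.ofFn_fin_append, List.ofFn_fin_append]
  calc _ = L := by simp only [L, List.map_ofFn]; rfl
    ListBraidEquiv _ (L.map (MulAut.conj γ⁻¹)) :=
        listBraidEquiv_map_conj_of_mem_closure hLprod (hL ▸ inv_mem hγ)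
    _ = List.ofFn a ++ (List.ofFn b).map (MulAut.conj (h * k)) := by
        rw [List.map_append, map_conj_map_conj, map_conj_map_conj, inv_mul_cancel, map_one,
          MulAut.coe_one, List.map_id, ← hhk]
    ListBraidEquiv _ _ := listBraidEquiv_append_map_conj_mul haprod hbprod (hA ▸ hh) (hB ▸ hk)

/-- Singleton lemma for products of components (key step of Seguin's field-of-definition
theorem): if `⟨H,K⟩ = HK`, `a` is a tuple generating `H` with product `1`, `b` a tuple
generating `K` with product `1`, then for all `γ, δ ∈ ⟨H,K⟩` with
`⟨γHγ⁻¹, δKδ⁻¹⟩ = ⟨H,K⟩`, the concatenation `(a^γ, b^δ)` is braid-equivalent to the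
concatenation `(a, b)`. -/
theorem seguin_singleton_lemma {G : Type*} [Group G] [Finite G] (H K : Subgroup G)
    (hHK : ((H ⊔ K : Subgroup G) : Set G) = (H : Set G) * (K : Set G))
    {r s : ℕ} (a : Fin r → G) (b : Fin s → G)
    (haH : ∀ i, a i ∈ H) (haprod : (List.ofFn a).prod = 1)
    (hagen : Subgroup.closure (Set.range a) = H)
    (hbK : ∀ i, b i ∈ K) (hbprod : (List.ofFn b).prod = 1)
    (hbgen : Subgroup.closure (Set.range b) = K)
    (γ δ : G) (hγ : γ ∈ H ⊔ K) (hδ : δ ∈ H ⊔ K)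
    (hjoin : Subgroup.map ((MulAut.conj γ).toMonoidHom) H ⊔
        Subgroup.map ((MulAut.conj δ).toMonoidHom) K = H ⊔ K) :
    BraidEquiv
      (Fin.append (fun i => γ * a i * γ⁻¹) (fun j => δ * b j * δ⁻¹))
      (Fin.append a b) :=
  seguin_singleton_lemma_general H K hHK a b haprod hagen hbprod hbgen γ δ hγ hδ hjoin
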